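/- Let x = P(x) be an LDF-PPS with least fixed point q* in [0,1]^n, and let y ∈ [0,1]^n with y < 1 in every coordinate. If P(y) ≤ y then y ≥ q*, and if P(y) ≥ y then y ≤ q*. In particular, if q* < 1 in every coordinate, then q* is the only fixed point q ∈ [0,1]^n of x = P(x) with q < 1 in every coordinate. -/

import Mathlib

open Filter Topology

/-- A probabilistic polynomial in `n` variables: `∑ r, p r * x ^ expo r`,
with nonnegative coefficients summing to at most 1. -/
structure ProbPoly (n : ℕ) where
  numTerms : ℕ
  p : Fin numTerms → ℝ
  expo : Fin numTerms → Fin n → ℕ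
  p_nonneg : ∀ r, 0 ≤ p r
  p_sum_le_one : ∑ r, p r ≤ 1

/-- Evaluation of a probabilistic polynomial. -/
def ProbPoly.eval {n : ℕ} (P : ProbPoly n) (x : Fin n → ℝ) : ℝ :=
  ∑ r, P.p r * ∏ i, x i ^ P.expo r i

/-- The unit box `[0,1]^n`. -/
def box01 (n : ℕ) : Set (Fin n → ℝ) := {x | ∀ i, 0 ≤ x i ∧ x i ≤ 1}

/-- The minimax value of the zero-sum matrix game with payoff matrix `B`:
`Val(B) = max_{s ∈ Δ_k} min_{t ∈ Δ_m} sᵀ B t`. -/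
noncomputable def gameVal {k m : ℕ} (B : Matrix (Fin k) (Fin m) ℝ) : ℝ :=
  ⨆ s : stdSimplex ℝ (Fin k), ⨅ t : stdSimplex ℝ (Fin m),
    ∑ i : Fin k, ∑ j : Fin m, s.1 i * B i j * t.1 j

/-- A probability distribution on `Fin k`. -/
def IsDist {k : ℕ} (d : Fin k → ℝ) : Prop := (∀ j, 0 ≤ d j) ∧ ∑ j, d j = 1

/-- `g` is the greatest fixed point of `F` in `[0,1]^n`. -/
def IsGFP {n : ℕ} (F : (Fin n → ℝ) → Fin n → ℝ) (g : Fin n → ℝ) : Prop :=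
  g ∈ box01 n ∧ F g = g ∧ ∀ g' ∈ box01 n, F g' = g' → g' ≤ g

/-- `q` is the least fixed point of `F` in `[0,1]^n`. -/
def IsLFP {n : ℕ} (F : (Fin n → ℝ) → Fin n → ℝ) (q : Fin n → ℝ) : Prop :=
  q ∈ box01 n ∧ F q = q ∧ ∀ q' ∈ box01 n, F q' = q' → q ≤ q'

/-- A minimax probabilistic polynomial system (minimax-PPS) in `n` variables:
for each `i`, an `nr i × nc i` matrix of probabilistic polynomials. -/
structure MinimaxPPS (n : ℕ) where
  nr : Fin n → ℕ
  nc : Fin n → ℕ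
  nr_pos : ∀ i, 0 < nr i
  nc_pos : ∀ i, 0 < nc i
  q : (i : Fin n) → Fin (nr i) → Fin (nc i) → ProbPoly n

namespace MinimaxPPS

/-- The payoff matrix `A_i(x)`. -/
noncomputable def A {n : ℕ} (P : MinimaxPPS n) (i : Fin n) (x : Fin n → ℝ) :
    Matrix (Fin (P.nr i)) (Fin (P.nc i)) ℝ :=
  Matrix.of fun j k => (P.q i j k).eval x

/-- `P(x)`: coordinatewise the value of the matrix game `A_i(x)`. -/
noncomputable def eval {n : ℕ} (P : MinimaxPPS n) (x : Fin n → ℝ) : Fin n → ℝ :=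
  fun i => gameVal (P.A i x)

/-- The minPPS `P_{σ,*}` obtained by fixing a mixed policy `σ` for the max player. -/
noncomputable def fixMax {n : ℕ} (P : MinimaxPPS n)
    (σ : (i : Fin n) → Fin (P.nr i) → ℝ) (x : Fin n → ℝ) : Fin n → ℝ :=
  fun i => ⨅ k : Fin (P.nc i), ∑ j, σ i j * (P.q i j k).eval x

/-- The maxPPS `P_{*,τ}` obtained by fixing a mixed policy `τ` for the min player. -/
noncomputable def fixMin {n : ℕ} (P : MinimaxPPS n)
    (τ : (i : Fin n) → Fin (P.nc i) → ℝ) (x : Fin n → ℝ) : Fin n → ℝ :=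
  fun i => ⨆ j : Fin (P.nr i), ∑ k, τ i k * (P.q i j k).eval x

/-- The PPS `P_{σ,τ}` obtained by fixing both policies. -/
def fixBoth {n : ℕ} (P : MinimaxPPS n)
    (σ : (i : Fin n) → Fin (P.nr i) → ℝ) (τ : (i : Fin n) → Fin (P.nc i) → ℝ)
    (x : Fin n → ℝ) : Fin n → ℝ :=
  fun i => ∑ j, ∑ k, σ i j * τ i k * (P.q i j k).eval x

end MinimaxPPS

/-- A PPS: each coordinate is a probabilistic polynomial. -/
structure PPS (n : ℕ) where
  poly : Fin n → ProbPoly n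

namespace PPS

def eval {n : ℕ} (P : PPS n) (x : Fin n → ℝ) : Fin n → ℝ := fun i => (P.poly i).eval x

/-- Edge of the dependency graph: `x_j` appears (with a nonzero coefficient) in `P_i(x)`. -/
def depends {n : ℕ} (P : PPS n) (i j : Fin n) : Prop :=
  ∃ r, (P.poly i).p r ≠ 0 ∧ (P.poly i).expo r j ≠ 0

end PPS

/-- A probabilistic polynomial is linear degenerate: every term with nonzero coefficient
has total degree exactly 1 (so it is linear with no constant term), and the
coefficients sum to exactly 1. -/
def IsLDPoly {n : ℕ} (Q : ProbPoly n) : Prop :=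
  (∀ r, Q.p r ≠ 0 → ∑ j, Q.expo r j = 1) ∧ ∑ r, Q.p r = 1

/-- There exists a bottom strongly connected component of the dependency relation `dep`
all of whose members satisfy `ld`. -/
def IsLDBottom {n : ℕ} (dep : Fin n → Fin n → Prop) (ld : Fin n → Prop) : Prop :=
  ∃ S : Set (Fin n), S.Nonempty ∧
    (∀ i ∈ S, ∀ j ∈ S, Relation.ReflTransGen dep i j) ∧
    (∀ i ∈ S, ∀ j, dep i j → j ∈ S) ∧
    (∀ i ∈ S, ld i)

/-- A PPS is linear degenerate free (LDF): no bottom strongly connected component of its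
dependency graph induces an LD subsystem. -/
def PPS.IsLDF {n : ℕ} (P : PPS n) : Prop :=
  ¬ IsLDBottom P.depends (fun i => IsLDPoly (P.poly i))

namespace MinimaxPPS

/-- Dependency relation of the PPS `P_{σ,τ}`. -/
def dependsMix {n : ℕ} (P : MinimaxPPS n) (σ : (i : Fin n) → Fin (P.nr i) → ℝ)
    (τ : (i : Fin n) → Fin (P.nc i) → ℝ) (i j : Fin n) : Prop :=
  ∃ a b r, σ i a ≠ 0 ∧ τ i b ≠ 0 ∧ (P.q i a b).p r ≠ 0 ∧ (P.q i a b).expo r j ≠ 0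

/-- Coordinate `i` of the PPS `P_{σ,τ}` is linear degenerate. -/
def IsLDMixAt {n : ℕ} (P : MinimaxPPS n) (σ : (i : Fin n) → Fin (P.nr i) → ℝ)
    (τ : (i : Fin n) → Fin (P.nc i) → ℝ) (i : Fin n) : Prop :=
  (∀ a b r, σ i a ≠ 0 → τ i b ≠ 0 → (P.q i a b).p r ≠ 0 → ∑ j, (P.q i a b).expo r j = 1) ∧
  (∑ a, ∑ b, σ i a * τ i b * ∑ r, (P.q i a b).p r) = 1

/-- A mixed min-player policy `τ` is LDF if for every mixed max-player policy `σ`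
the PPS `P_{σ,τ}` is an LDF-PPS. -/
def IsLDFPolicy {n : ℕ} (P : MinimaxPPS n) (τ : (i : Fin n) → Fin (P.nc i) → ℝ) : Prop :=
  ∀ σ : (i : Fin n) → Fin (P.nr i) → ℝ, (∀ i, IsDist (σ i)) →
    ¬ IsLDBottom (P.dependsMix σ τ) (P.IsLDMixAt σ τ)

end MinimaxPPS

/-- The three forms of equations in an SNF minimax-PPS. -/
inductive SNFForm | L | Q | M
  deriving DecidableEq

/-- A minimax-PPS in simple normal form (SNF): each coordinate is of form L
(linear, `a0 i + ∑ j, a i j * x j`), form Q (`x (quadL i) * x (quadR i)`), or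
form M (the value of a matrix game each of whose entries is a variable or the
constant 1, encoded by `Option (Fin n)` with `none` standing for `1`). -/
structure SNFPPS (n : ℕ) where
  form : Fin n → SNFForm
  a0 : Fin n → ℝ
  a : Fin n → Fin n → ℝ
  quadL : Fin n → Fin n
  quadR : Fin n → Fin n
  nr : Fin n → ℕ
  nc : Fin n → ℕ
  nr_pos : ∀ i, 0 < nr i
  nc_pos : ∀ i, 0 < nc i
  entry : (i : Fin n) → Fin (nr i) → Fin (nc i) → Option (Fin n)
  a0_nonneg : ∀ i, 0 ≤ a0 i
  a_nonneg : ∀ i j, 0 ≤ a i j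
  a_sum_le_one : ∀ i, a0 i + ∑ j, a i j ≤ 1

namespace SNFPPS

noncomputable def eval {n : ℕ} (P : SNFPPS n) (x : Fin n → ℝ) : Fin n → ℝ := fun i =>
  match P.form i with
  | SNFForm.L => P.a0 i + ∑ j, P.a i j * x j
  | SNFForm.Q => x (P.quadL i) * x (P.quadR i)
  | SNFForm.M => gameVal (Matrix.of fun j k => (P.entry i j k).elim 1 x)

/-- The maxPPS `P_{*,τ}` obtained by fixing a mixed policy `τ` for the min player. -/
noncomputable def fixMin {n : ℕ} (P : SNFPPS n)
    (τ : (i : Fin n) → Fin (P.nc i) → ℝ) (x : Fin n → ℝ) : Fin n → ℝ := fun i =>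
  match P.form i with
  | SNFForm.L => P.a0 i + ∑ j, P.a i j * x j
  | SNFForm.Q => x (P.quadL i) * x (P.quadR i)
  | SNFForm.M => ⨆ j : Fin (P.nr i), ∑ k, τ i k * (P.entry i j k).elim 1 x

/-- The minPPS `P_{σ,*}` obtained by fixing a mixed policy `σ` for the max player. -/
noncomputable def fixMax {n : ℕ} (P : SNFPPS n)
    (σ : (i : Fin n) → Fin (P.nr i) → ℝ) (x : Fin n → ℝ) : Fin n → ℝ := fun i =>
  match P.form i with
  | SNFForm.L => P.a0 i + ∑ j, P.a i j * x j
  | SNFForm.Q => x (P.quadL i) * x (P.quadR i)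
  | SNFForm.M => ⨅ k : Fin (P.nc i), ∑ j, σ i j * (P.entry i j k).elim 1 x

/-- `S` is closed under the rules defining the least closure set: it contains every
deficient form-L variable, and is closed under rules (a) and (b). -/
def Closed {n : ℕ} (P : SNFPPS n) (S : Set (Fin n)) : Prop :=
  (∀ i, P.form i = SNFForm.L → P.a0 i + ∑ j, P.a i j < 1 → i ∈ S) ∧
  (∀ i, P.form i = SNFForm.L → (∃ j ∈ S, P.a i j ≠ 0) → i ∈ S) ∧
  (∀ i, P.form i = SNFForm.Q → (P.quadL i ∈ S ∨ P.quadR i ∈ S) → i ∈ S) ∧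
  (∀ i, P.form i = SNFForm.M →
    (∀ r : Fin (P.nr i), ∃ c : Fin (P.nc i), ∃ v ∈ S, P.entry i r c = some v) → i ∈ S)

/-- The least closure set `S`. -/
def leastClosure {n : ℕ} (P : SNFPPS n) : Set (Fin n) := ⋂₀ {S | P.Closed S}

end SNFPPS

/-- Labels for the three sets in the limit-sure construction: `s` (the set `S ∪ {1}`),
`f` (the set `F`), and `o` (the remaining set `O`). -/
inductive Lab | s | f | o
  deriving DecidableEq


/-!
`P(y) ≤ y → q* ≤ y` is Knaster–Tarski on the complete lattice `[0,1]^n`.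

For the converse, let `y ≤ P(y)`, `y < 1` and `y ≰ q*`, and take the least `t ∈ (0,1)` with
`y ≤ w := (1 - t) q* + t`. Along the segment from `q*` to `1` every monomial lies below its
chord, so on the tight set `T = {i | y i = w i}` the chain
`y i ≤ P_i(y) ≤ P_i(w) ≤ (1 - t) P_i(q*) + t = w i = y i` is an equality. Hence each `P_i`,
`i ∈ T`, has coefficients summing to `1`, only involves variables of `T`, and (the chord
inequality being strict beyond degree one) is affine. Averaging then shows that on the part of
`T` where `q*` is smallest every term is a single variable from that part: this part is closed
and linear degenerate, so it contains an LD bottom component, against LDF.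
-/

open Finset

section Chord

variable {ι : Type*} {t : ℝ}

theorem chord_mul_chord (t U V : ℝ) :
    ((1 - t) * U + t) * ((1 - t) * V + t) =
      (1 - t) * (U * V) + t - t * (1 - t) * (1 - U) * (1 - V) := by
  ring

theorem mul_le_chord_of_le_chord (ht0 : 0 ≤ t) (ht1 : t ≤ 1) {u v U V : ℝ}
    (hu0 : 0 ≤ u) (hu : u ≤ (1 - t) * U + t) (hv0 : 0 ≤ v) (hv : v ≤ (1 - t) * V + t)
    (hU1 : U ≤ 1) (hV1 : V ≤ 1) :
    u * v ≤ (1 - t) * (U * V) + t := by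
  have hgap : 0 ≤ t * (1 - t) * (1 - U) * (1 - V) := by
    have := sub_nonneg.2 ht1; have := sub_nonneg.2 hU1; have := sub_nonneg.2 hV1; positivity
  calc u * v ≤ ((1 - t) * U + t) * ((1 - t) * V + t) :=
        mul_le_mul hu hv hv0 (hu0.trans hu)
    _ ≤ _ := by rw [chord_mul_chord]; linarith

theorem prod_le_chord (ht0 : 0 ≤ t) (ht1 : t ≤ 1) {s : Finset ι} {f g : ι → ℝ}
    (hf0 : ∀ j ∈ s, 0 ≤ f j) (hfg : ∀ j ∈ s, f j ≤ (1 - t) * g j + t)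
    (hg0 : ∀ j ∈ s, 0 ≤ g j) (hg1 : ∀ j ∈ s, g j ≤ 1) :
    ∏ j ∈ s, f j ≤ (1 - t) * ∏ j ∈ s, g j + t := by
  classical
  induction s using Finset.induction_on with
  | empty => simp
  | insert a s ha ih =>
    simp only [mem_insert, forall_eq_or_imp] at hf0 hfg hg0 hg1
    rw [prod_insert ha, prod_insert ha]
    exact mul_le_chord_of_le_chord ht0 ht1 hf0.1 hfg.1 (prod_nonneg hf0.2)
      (ih hf0.2 hfg.2 hg0.2 hg1.2) hg1.1 (prod_le_one hg0.2 hg1.2)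

theorem prod_lt_chord (ht0 : 0 < t) (ht1 : t < 1) {s : Finset ι} {f g : ι → ℝ}
    (hf0 : ∀ j ∈ s, 0 ≤ f j) (hfg : ∀ j ∈ s, f j ≤ (1 - t) * g j + t)
    (hg0 : ∀ j ∈ s, 0 ≤ g j) (hg1 : ∀ j ∈ s, g j ≤ 1)
    {a b : ι} (ha : a ∈ s) (hb : b ∈ s) (hab : a ≠ b) (hga : g a < 1) (hgb : g b < 1) :
    ∏ j ∈ s, f j < (1 - t) * ∏ j ∈ s, g j + t := by
  classical
  have hsub : ∀ j ∈ s.erase a, j ∈ s := fun j hj => mem_of_mem_erase hj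
  have hG : ∏ j ∈ s.erase a, g j < 1 := by
    rw [← mul_prod_erase _ g (mem_erase.2 ⟨hab.symm, hb⟩)]
    exact (mul_le_of_le_one_right (hg0 b hb)
      (prod_le_one (fun j hj => hg0 j (hsub j (mem_of_mem_erase hj)))
        fun j hj => hg1 j (hsub j (mem_of_mem_erase hj)))).trans_lt hgb
  set G := ∏ j ∈ s.erase a, g j
  have hgap : 0 < t * (1 - t) * (1 - g a) * (1 - G) := by
    have := sub_pos.2 ht1; have := sub_pos.2 hga; have := sub_pos.2 hG; positivity
  rw [← mul_prod_erase _ f ha, ← mul_prod_erase _ g ha]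
  calc f a * ∏ j ∈ s.erase a, f j ≤ ((1 - t) * g a + t) * ((1 - t) * G + t) :=
        mul_le_mul (hfg a ha)
          (prod_le_chord ht0.le ht1.le (fun j hj => hf0 j (hsub j hj))
            (fun j hj => hfg j (hsub j hj)) (fun j hj => hg0 j (hsub j hj))
            fun j hj => hg1 j (hsub j hj))
          (prod_nonneg fun j hj => hf0 j (hsub j hj)) ((hf0 a ha).trans (hfg a ha))
    _ < _ := by rw [chord_mul_chord]; linarith

theorem lt_one_of_chord_lt_one {t x : ℝ} (ht1 : t < 1) (h : (1 - t) * x + t < 1) : x < 1 := by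
  nlinarith

end Chord

theorem exists_tight_chord_param {ι : Type*} [Fintype ι] {q y : ι → ℝ} (hq1 : ∀ j, q j ≤ 1)
    (hy1 : ∀ j, y j < 1) (hlt : ∃ i, q i < y i) :
    ∃ t, 0 < t ∧ t < 1 ∧ (∀ j, y j ≤ (1 - t) * q j + t) ∧ ∃ i, y i = (1 - t) * q i + t := by
  obtain ⟨i₀, hi₀⟩ := hlt
  have : Nonempty ι := ⟨i₀⟩
  -- `t` is the largest ratio `(y j - q j) / (1 - q j)`; the junk value at `q j = 1` is `0`
  obtain ⟨i, hmax⟩ := Finite.exists_max fun j => (y j - q j) / (1 - q j)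
  set t := (y i - q i) / (1 - q i)
  have ht0 : 0 < t :=
    (div_pos (sub_pos.2 hi₀) (sub_pos.2 (hi₀.trans (hy1 i₀)))).trans_le (hmax i₀)
  have hqi : q i < 1 := by
    by_contra! h
    simp [t, show 1 - q i = 0 by linarith [hq1 i]] at ht0
  have hqi' : 0 < 1 - q i := sub_pos.2 hqi
  refine ⟨t, ht0, (div_lt_one hqi').2 (by linarith [hy1 i]), fun j => ?_,
    i, by simp only [t]; field_simp; ring⟩
  rcases (hq1 j).lt_or_eq with hqj | hqj
  · have := (div_le_iff₀ (sub_pos.2 hqj)).1 (hmax j)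
    linarith
  · rw [hqj]; linarith [hy1 j]

section WeightedSum

variable {κ : Type*} {s : Finset κ} {p a b : κ → ℝ}

theorem eq_of_sum_mul_le_sum_mul (hab : ∀ r ∈ s, p r * a r ≤ p r * b r)
    (h : ∑ r ∈ s, p r * b r ≤ ∑ r ∈ s, p r * a r) {r : κ} (hr : r ∈ s) (hpr : p r ≠ 0) :
    a r = b r :=
  mul_left_cancel₀ hpr <| (sum_eq_sum_iff_of_le hab).1 (h.antisymm' (sum_le_sum hab)) r hr

end WeightedSum

section Monomial

variable {ι : Type*} [Fintype ι] {t : ℝ}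

theorem prod_pow_eq_prod_sigma {M : Type*} [CommMonoid M] (x : ι → M) (α : ι → ℕ) :
    ∏ j, x j ^ α j = ∏ p ∈ univ.sigma fun j => range (α j), x p.1 := by
  rw [prod_sigma]
  simp

theorem prod_pow_le_chord (ht0 : 0 ≤ t) (ht1 : t ≤ 1) {x : ι → ℝ} (hx0 : ∀ j, 0 ≤ x j)
    (hx1 : ∀ j, x j ≤ 1) (α : ι → ℕ) :
    ∏ j, ((1 - t) * x j + t) ^ α j ≤ (1 - t) * ∏ j, x j ^ α j + t := by
  rw [prod_pow_eq_prod_sigma, prod_pow_eq_prod_sigma]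
  exact prod_le_chord ht0 ht1
    (fun p _ => by have := hx0 p.1; have := sub_nonneg.2 ht1; positivity)
    (fun _ _ => le_rfl) (fun p _ => hx0 p.1) fun p _ => hx1 p.1

theorem prod_pow_lt_chord (ht0 : 0 < t) (ht1 : t < 1) {x : ι → ℝ} (hx0 : ∀ j, 0 ≤ x j)
    (hx1 : ∀ j, x j ≤ 1) {α : ι → ℕ} (hα : 2 ≤ ∑ j, α j) (hxα : ∀ j, α j ≠ 0 → x j < 1) :
    ∏ j, ((1 - t) * x j + t) ^ α j < (1 - t) * ∏ j, x j ^ α j + t := by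
  rw [prod_pow_eq_prod_sigma, prod_pow_eq_prod_sigma]
  have hcard : 1 < #(univ.sigma fun j => range (α j)) := by
    simp only [card_sigma, card_range]; omega
  obtain ⟨a, ha, b, hb, hab⟩ := one_lt_card.1 hcard
  have hlt : ∀ p ∈ univ.sigma fun j => range (α j), x p.1 < 1 := fun p hp =>
    hxα p.1 (Nat.pos_iff_ne_zero.1 (Nat.zero_lt_of_lt (mem_range.1 (mem_sigma.1 hp).2)))
  exact prod_lt_chord ht0 ht1 (fun p _ => by have := hx0 p.1; have := sub_pos.2 ht1; positivity)
    (fun _ _ => le_rfl) (fun p _ => hx0 p.1) (fun p _ => hx1 p.1) ha hb hab (hlt a ha) (hlt b hb)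

theorem prod_pow_lt_prod_pow {x z : ι → ℝ} (hx0 : ∀ j, 0 ≤ x j) (hxz : ∀ j, x j ≤ z j)
    (hz : ∀ j, 0 < z j) {α : ι → ℕ} {j : ι} (hj : α j ≠ 0) (hlt : x j < z j) :
    ∏ l, x l ^ α l < ∏ l, z l ^ α l := by
  classical
  rw [← mul_prod_erase univ _ (mem_univ j),
    ← mul_prod_erase univ (fun l => z l ^ α l) (mem_univ j)]
  calc x j ^ α j * ∏ l ∈ univ.erase j, x l ^ α l
      ≤ x j ^ α j * ∏ l ∈ univ.erase j, z l ^ α l :=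
        mul_le_mul_of_nonneg_left (prod_le_prod (fun l _ => pow_nonneg (hx0 l) _)
          fun l _ => pow_le_pow_left₀ (hx0 l) (hxz l) _) (pow_nonneg (hx0 j) _)
    _ < z j ^ α j * ∏ l ∈ univ.erase j, z l ^ α l :=
        mul_lt_mul_of_pos_right (pow_lt_pow_left₀ hlt (hx0 j) hj)
          (prod_pos fun l _ => pow_pos (hz l) _)

theorem prod_pow_single [DecidableEq ι] (x : ι → ℝ) (i : ι) :
    ∏ j, x j ^ (Pi.single i 1 : ι → ℕ) j = x i := by
  simp [Pi.single_apply, pow_ite]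

theorem eq_zero_or_exists_eq_single_of_sum_le_one [DecidableEq ι] {α : ι → ℕ}
    (h : ∑ j, α j ≤ 1) : α = 0 ∨ ∃ i, α = Pi.single i 1 := by
  by_cases h0 : α = 0
  · exact Or.inl h0
  obtain ⟨i, hi⟩ := Function.ne_iff.1 h0
  have hsplit := add_sum_erase univ α (mem_univ i)
  have hrest : ∀ j ∈ univ.erase i, α j = 0 := sum_eq_zero_iff.1 (by simp at hi; omega)
  refine Or.inr ⟨i, funext fun j => ?_⟩
  by_cases hji : j = i
  · subst hji; simp at hi ⊢; omega
  · simpa [hji] using hrest j (mem_erase.2 ⟨hji, mem_univ j⟩)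

end Monomial

theorem mem_box01_iff_mem_Icc {n : ℕ} {x : Fin n → ℝ} : x ∈ box01 n ↔ x ∈ Set.Icc 0 1 := by
  simp [box01, Set.mem_Icc, Pi.le_def, forall_and]

namespace ProbPoly

variable {n : ℕ} (Q : ProbPoly n)

def monomial (r : Fin Q.numTerms) (x : Fin n → ℝ) : ℝ := ∏ j, x j ^ Q.expo r j

theorem eval_eq_sum_monomial (x : Fin n → ℝ) : Q.eval x = ∑ r, Q.p r * Q.monomial r x := rfl

theorem monomial_nonneg (r : Fin Q.numTerms) {x : Fin n → ℝ} (hx : ∀ j, 0 ≤ x j) :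
    0 ≤ Q.monomial r x :=
  prod_nonneg fun j _ => pow_nonneg (hx j) _

theorem monomial_le_one (r : Fin Q.numTerms) {x : Fin n → ℝ} (hx : x ∈ box01 n) :
    Q.monomial r x ≤ 1 :=
  prod_le_one (fun j _ => pow_nonneg (hx j).1 _) fun j _ => pow_le_one₀ (hx j).1 (hx j).2

theorem monomial_mono (r : Fin Q.numTerms) {x z : Fin n → ℝ} (hx : ∀ j, 0 ≤ x j)
    (hxz : x ≤ z) : Q.monomial r x ≤ Q.monomial r z :=
  prod_le_prod (fun j _ => pow_nonneg (hx j) _) fun j _ => pow_le_pow_left₀ (hx j) (hxz j) _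

theorem eval_nonneg {x : Fin n → ℝ} (hx : ∀ j, 0 ≤ x j) : 0 ≤ Q.eval x :=
  sum_nonneg fun r _ => mul_nonneg (Q.p_nonneg r) (Q.monomial_nonneg r hx)

theorem eval_le_one {x : Fin n → ℝ} (hx : x ∈ box01 n) : Q.eval x ≤ 1 :=
  (sum_le_sum fun r _ => mul_le_of_le_one_right (Q.p_nonneg r) (Q.monomial_le_one r hx)).trans
    Q.p_sum_le_one

theorem eval_mono {x z : Fin n → ℝ} (hx : ∀ j, 0 ≤ x j) (hxz : x ≤ z) : Q.eval x ≤ Q.eval z :=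
  sum_le_sum fun r _ => mul_le_mul_of_nonneg_left (Q.monomial_mono r hx hxz) (Q.p_nonneg r)

theorem eq_chord_of_chord_le_eval {q y : Fin n → ℝ} {t : ℝ} (hq : q ∈ box01 n) (ht0 : 0 < t)
    (ht1 : t ≤ 1) (hy0 : ∀ j, 0 ≤ y j) (hyw : ∀ j, y j ≤ (1 - t) * q j + t)
    (h : (1 - t) * Q.eval q + t ≤ Q.eval y) :
    ∑ r, Q.p r = 1 ∧ ∀ r, Q.p r ≠ 0 →
      Q.monomial r y = Q.monomial r (fun j => (1 - t) * q j + t) ∧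
      Q.monomial r (fun j => (1 - t) * q j + t) = (1 - t) * Q.monomial r q + t := by
  set w : Fin n → ℝ := fun j => (1 - t) * q j + t
  have hchord : ∀ r, Q.monomial r w ≤ (1 - t) * Q.monomial r q + t := fun r =>
    prod_pow_le_chord ht0.le ht1 (fun j => (hq j).1) (fun j => (hq j).2) _
  have hsum : ∑ r, Q.p r * ((1 - t) * Q.monomial r q + t) =
      (1 - t) * Q.eval q + t * ∑ r, Q.p r := by
    rw [eval_eq_sum_monomial, mul_sum, mul_sum, ← sum_add_distrib]
    exact sum_congr rfl fun r _ => by ring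
  have hyw' : Q.eval y ≤ Q.eval w := Q.eval_mono hy0 hyw
  have hwc : Q.eval w ≤ ∑ r, Q.p r * ((1 - t) * Q.monomial r q + t) :=
    sum_le_sum fun r _ => mul_le_mul_of_nonneg_left (hchord r) (Q.p_nonneg r)
  have hp1 : ∑ r, Q.p r = 1 := by
    refine Q.p_sum_le_one.antisymm ?_
    nlinarith
  rw [hp1, mul_one] at hsum
  refine ⟨hp1, fun r hr => ⟨?_, ?_⟩⟩
  · exact eq_of_sum_mul_le_sum_mul
      (fun r _ => mul_le_mul_of_nonneg_left (Q.monomial_mono r hy0 hyw) (Q.p_nonneg r))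
      (hwc.trans (hsum.trans_le h)) (mem_univ r) hr
  · exact eq_of_sum_mul_le_sum_mul
      (fun r _ => mul_le_mul_of_nonneg_left (hchord r) (Q.p_nonneg r))
      (hsum.trans_le (h.trans hyw')) (mem_univ r) hr

end ProbPoly

theorem IsLDBottom.of_closed {n : ℕ} {dep : Fin n → Fin n → Prop} {ld : Fin n → Prop}
    {T : Set (Fin n)} (hT : T.Nonempty) (hclosed : ∀ i ∈ T, ∀ j, dep i j → j ∈ T)
    (hld : ∀ i ∈ T, ld i) : IsLDBottom dep ld := by
  set reach : Fin n → Set (Fin n) := fun i => {j | Relation.ReflTransGen dep i j}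
  have hreachT : ∀ i ∈ T, reach i ⊆ T := fun i hi j hj => by
    induction hj with
    | refl => exact hi
    | tail _ hd ih => exact hclosed _ ih _ hd
  -- a member of `T` whose reachable set is smallest is in a bottom SCC
  obtain ⟨i₀, hi₀, hmin⟩ := Set.exists_min_image T (fun i => (reach i).ncard) T.toFinite hT
  refine ⟨reach i₀, ⟨i₀, .refl⟩, fun i hi j hj => ?_, fun i hi j hd => hi.tail hd,
    fun i hi => hld i (hreachT i₀ hi₀ hi)⟩
  have hsub : reach i ⊆ reach i₀ := fun k hk => Relation.ReflTransGen.trans hi hk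
  have heq : reach i = reach i₀ := Set.eq_of_subset_of_ncard_le hsub (hmin i (hreachT i₀ hi₀ hi))
  rw [← heq] at hj
  exact hj

namespace PPS

variable {n : ℕ} (P : PPS n)

theorem eval_mem_box01 {x : Fin n → ℝ} (hx : x ∈ box01 n) : P.eval x ∈ box01 n :=
  fun i => ⟨(P.poly i).eval_nonneg fun j => (hx j).1, (P.poly i).eval_le_one hx⟩

theorem eval_mono {x z : Fin n → ℝ} (hx : ∀ j, 0 ≤ x j) (hxz : x ≤ z) : P.eval x ≤ P.eval z :=
  fun i => (P.poly i).eval_mono hx hxz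

theorem exists_fixedPt_le_of_eval_le {y : Fin n → ℝ} (hy : y ∈ box01 n) (h : P.eval y ≤ y) :
    ∃ z ∈ box01 n, P.eval z = z ∧ z ≤ y := by
  have : Fact ((0 : Fin n → ℝ) ≤ 1) := ⟨zero_le_one⟩
  let F : Set.Icc (0 : Fin n → ℝ) 1 →o Set.Icc (0 : Fin n → ℝ) 1 :=
    { toFun := fun x =>
        ⟨P.eval x, mem_box01_iff_mem_Icc.1 (P.eval_mem_box01 (mem_box01_iff_mem_Icc.2 x.2))⟩
      monotone' := fun x z hxz => P.eval_mono x.2.1 hxz }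
  exact ⟨F.lfp, mem_box01_iff_mem_Icc.2 F.lfp.2, congrArg Subtype.val F.map_lfp,
    F.lfp_le (a := ⟨y, mem_box01_iff_mem_Icc.1 hy⟩) h⟩

theorem lfp_le_of_eval_le {q y : Fin n → ℝ} (hq : IsLFP P.eval q) (hy : y ∈ box01 n)
    (h : P.eval y ≤ y) : q ≤ y :=
  let ⟨z, hz, hPz, hzy⟩ := P.exists_fixedPt_le_of_eval_le hy h
  (hq.2.2 z hz hPz).trans hzy

def IsStochasticAffineOn (T : Set (Fin n)) : Prop :=
  ∀ i ∈ T, ∑ r, (P.poly i).p r = 1 ∧ ∀ r, (P.poly i).p r ≠ 0 →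
    (∀ j, (P.poly i).expo r j ≠ 0 → j ∈ T) ∧ ∑ j, (P.poly i).expo r j ≤ 1

theorem isStochasticAffineOn_setOf_eq_chord {q y : Fin n → ℝ} {t : ℝ} (hq : q ∈ box01 n)
    (hPq : P.eval q = q) (hy0 : ∀ j, 0 ≤ y j) (hy1 : ∀ j, y j < 1) (hPy : y ≤ P.eval y)
    (ht0 : 0 < t) (ht1 : t < 1) (hyw : ∀ j, y j ≤ (1 - t) * q j + t) :
    P.IsStochasticAffineOn {i | y i = (1 - t) * q i + t} := by
  intro i hi
  have hchord : (1 - t) * (P.poly i).eval q + t ≤ (P.poly i).eval y := by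
    rw [show (P.poly i).eval q = q i from congrFun hPq i, ← hi]; exact hPy i
  obtain ⟨hp1, hterm⟩ :=
    (P.poly i).eq_chord_of_chord_le_eval hq ht0 ht1.le hy0 hyw hchord
  refine ⟨hp1, fun r hr => ?_⟩
  obtain ⟨hyw_eq, hchord_eq⟩ := hterm r hr
  have hsupp : ∀ j, (P.poly i).expo r j ≠ 0 → y j = (1 - t) * q j + t := fun j hj => by
    by_contra hne
    exact hyw_eq.not_lt (prod_pow_lt_prod_pow hy0 hyw (fun l => by nlinarith [(hq l).1]) hj
      ((hyw j).lt_of_ne hne))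
  refine ⟨hsupp, not_lt.1 fun hdeg => hchord_eq.not_lt ?_⟩
  exact prod_pow_lt_chord ht0 ht1 (fun j => (hq j).1) (fun j => (hq j).2) hdeg
    fun j hj => lt_one_of_chord_lt_one ht1 (hsupp j hj ▸ hy1 j)

theorem isLDBottom_of_isStochasticAffineOn {T : Set (Fin n)} (hT : T.Nonempty)
    (hA : P.IsStochasticAffineOn T) {q : Fin n → ℝ} (hfix : ∀ i ∈ T, P.eval q i = q i)
    (hq1 : ∀ i ∈ T, q i < 1) : IsLDBottom P.depends fun i => IsLDPoly (P.poly i) := by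
  classical
  obtain ⟨i₀, hi₀, hmin⟩ := Set.exists_min_image T q T.toFinite hT
  set T' := {i ∈ T | q i = q i₀}
  have hsingle : ∀ i ∈ T', ∀ r, (P.poly i).p r ≠ 0 →
      ∃ j ∈ T', (P.poly i).expo r = Pi.single j 1 := by
    rintro i ⟨hiT, hqi⟩ r hr
    obtain ⟨hp1, hterm⟩ := hA i hiT
    have hval : ∀ r, (P.poly i).p r ≠ 0 → (P.poly i).monomial r q = 1 ∨
        ∃ j ∈ T, (P.poly i).expo r = Pi.single j 1 ∧ (P.poly i).monomial r q = q j := fun r hr =>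
      (eq_zero_or_exists_eq_single_of_sum_le_one (hterm r hr).2).imp
        (fun h => by simp [ProbPoly.monomial, h])
        fun ⟨j, hj⟩ => ⟨j, (hterm r hr).1 j (by simp [hj]), hj, by
          rw [ProbPoly.monomial, hj, prod_pow_single]⟩
    have hge : ∀ r ∈ univ, (P.poly i).p r * q i₀ ≤ (P.poly i).p r * (P.poly i).monomial r q :=
      fun r _ => by
        by_cases hr : (P.poly i).p r = 0
        · simp [hr]
        refine mul_le_mul_of_nonneg_left ?_ ((P.poly i).p_nonneg r)
        rcases hval r hr with h | ⟨j, hjT, -, h⟩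
        · exact h ▸ (hq1 i₀ hi₀).le
        · exact h ▸ hmin j hjT
    have hsum : ∑ r, (P.poly i).p r * (P.poly i).monomial r q ≤ ∑ r, (P.poly i).p r * q i₀ := by
      rw [← sum_mul, hp1, one_mul, ← hqi, ← hfix i hiT]; rfl
    have heq := eq_of_sum_mul_le_sum_mul hge hsum (mem_univ r) hr
    rcases hval r hr with h | ⟨j, hjT, hj, h⟩
    · exact absurd (heq.trans h) (hq1 i₀ hi₀).ne
    · exact ⟨j, ⟨hjT, (heq.trans h).symm⟩, hj⟩
  refine IsLDBottom.of_closed (T := T') ⟨i₀, hi₀, rfl⟩ ?_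
    fun i hi => ⟨fun r hr => ?_, (hA i hi.1).1⟩
  · rintro i hi j ⟨r, hr, hj⟩
    obtain ⟨k, hk, hrk⟩ := hsingle i hi r hr
    rw [hrk] at hj
    rwa [show j = k by by_contra h; simp [h] at hj]
  · obtain ⟨k, -, hrk⟩ := hsingle i hi r hr
    simp [hrk]

theorem le_of_le_eval (hLDF : P.IsLDF) {q y : Fin n → ℝ}
    (hq : q ∈ box01 n) (hPq : P.eval q = q) (hy : y ∈ box01 n) (hy1 : ∀ i, y i < 1)
    (hPy : y ≤ P.eval y) : y ≤ q := by
  by_contra hyq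
  obtain ⟨t, ht0, ht1, hyw, i, hi⟩ :=
    exists_tight_chord_param (fun j => (hq j).2) hy1 (by simpa [Pi.le_def] using hyq)
  exact hLDF <| P.isLDBottom_of_isStochasticAffineOn ⟨i, hi⟩
    (P.isStochasticAffineOn_setOf_eq_chord hq hPq (fun j => (hy j).1) hy1 hPy ht0 ht1 hyw)
    (fun j _ => congrFun hPq j) fun j hj => lt_one_of_chord_lt_one ht1 (hj ▸ hy1 j)

end PPS

/-- For an LDF-PPS with least fixed point `q*`, and any `y ∈ [0,1]^n`
with `y < 1` in every coordinate: if `P(y) ≤ y` then `y ≥ q*`, and if `P(y) ≥ y`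
then `y ≤ q*`. In particular, if `q* < 1` in every coordinate, then `q*` is the
only fixed point of `P` in `[0,1]^n` that is `< 1` in every coordinate. -/
theorem ldf_pps_lfp_comparison {n : ℕ} (P : PPS n) (hLDF : P.IsLDF)
    (q : Fin n → ℝ) (hq : IsLFP P.eval q) :
    (∀ y ∈ box01 n, (∀ i, y i < 1) →
      ((P.eval y ≤ y → q ≤ y) ∧ (y ≤ P.eval y → y ≤ q))) ∧
    ((∀ i, q i < 1) →
      ∀ q' ∈ box01 n, P.eval q' = q' → (∀ i, q' i < 1) → q' = q) := by
  refine ⟨fun y hy hy1 => ⟨P.lfp_le_of_eval_le hq hy, P.le_of_le_eval hLDF hq.1 hq.2.1 hy hy1⟩,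
    fun _ q' hq' hPq' hq'1 => ?_⟩
  exact (P.le_of_le_eval hLDF hq.1 hq.2.1 hq' hq'1 hPq'.ge).antisymm
    (P.lfp_le_of_eval_le hq hq' hPq'.le)
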